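/- The group G is weakly branch: for every vertex v ∈ {0,1}*, the rigid stabilizer Rist_G(v), consisting of all elements of G that fix every word not having v as a prefix, is a nontrivial subgroup of G. -/

import Mathlib

namespace BVTree

/-- States of the automaton (generators, their inverses, and the identity). -/
inductive Q : Type
  | e | qa | qb | qc | qd | qa' | qb' | qc' | qd'
  deriving DecidableEq

open Q

/-- Output function of the automaton. -/
def Qout : Q → Bool → Bool
  | qa, x => !x
  | qa', x => !x
  | _, x => x

/-- Transition function of the automaton. -/
def Qtrans : Q → Bool → Q
  | qa, false => qd
  | qa, true => e
  | qb, false => qa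
  | qb, true => qc
  | qc, _ => qa
  | qd, false => e
  | qd, true => qb
  | qa', false => e
  | qa', true => qd'
  | qb', false => qa'
  | qb', true => qc'
  | qc', _ => qa'
  | qd', false => e
  | qd', true => qb'
  | e, _ => e

/-- The state corresponding to the inverse automorphism. -/
def Qinv : Q → Q
  | e => e
  | qa => qa' | qb => qb' | qc => qc' | qd => qd'
  | qa' => qa | qb' => qb | qc' => qc | qd' => qd

/-- The action of a state on finite binary words. -/
def act : Q → List Bool → List Bool
  | _, [] => []
  | q, x :: w => Qout q x :: act (Qtrans q x) w

lemma act_inv (q : Q) : ∀ w, act (Qinv q) (act q w) = w := by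
  intro w
  induction w generalizing q with
  | nil => rfl
  | cons x w ih =>
    have h1 : Qout (Qinv q) (Qout q x) = x := by cases q <;> cases x <;> rfl
    have h2 : Qtrans (Qinv q) (Qout q x) = Qinv (Qtrans q x) := by
      cases q <;> cases x <;> rfl
    simp [act, h1, h2, ih]

/-- The tree automorphism determined by a state of the automaton. -/
def aut (q : Q) : Equiv.Perm (List Bool) where
  toFun := act q
  invFun := act (Qinv q)
  left_inv := act_inv q
  right_inv := by
    intro w
    have h : Qinv (Qinv q) = q := by cases q <;> rfl
    simpa [h] using act_inv (Qinv q) w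

/-- The automorphism `a`: `a(0w) = 1·d(w)`, `a(1w) = 0·w`. -/
def a : Equiv.Perm (List Bool) := aut qa
/-- The automorphism `b`: `b(0w) = 0·a(w)`, `b(1w) = 1·c(w)`. -/
def b : Equiv.Perm (List Bool) := aut qb
/-- The automorphism `c`: `c(0w) = 0·a(w)`, `c(1w) = 1·a(w)`. -/
def c : Equiv.Perm (List Bool) := aut qc
/-- The automorphism `d`: `d(0w) = 0·w`, `d(1w) = 1·b(w)`. -/
def d : Equiv.Perm (List Bool) := aut qd

/-- The group `G` generated by `a`, `b`, `c`, `d`. -/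
def G : Subgroup (Equiv.Perm (List Bool)) := Subgroup.closure {a, b, c, d}

/-!
Let `K` be the normal closure in `G` of the commutators `⁅c ^ k, a⁆`, `⁅b ^ k, c⁆`, `⁅d ^ k, b⁆`,
`⁅a ^ (2 * k), d⁆` (`k : ℕ`). Each of them is the right section of the next one in the cycle
`⁅c ^ k, a⁆ → ⁅b ^ k, c⁆ → ⁅d ^ k, b⁆ → ⁅a ^ (2 * k), d⁆ → ⁅c ^ (2 * k), a⁆`, an element fixing the
first level with trivial left section; conjugating by `a` moves it to the left subtree. Since every
element of `G` is also a first-level section of an element of `G` fixing the first level, each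
`x ∈ K` is the section at either first-level vertex of an element of `K` acting trivially on the
other subtree. Iterating along `v`, each `x ∈ K` is the section at `v` of an element of
`Rist_G(v)`, and `⁅c, a⁆ ≠ 1` lies in `K`.
-/

open Equiv
open scoped commutatorElement

section NormalClosureIn

variable {α : Type*} [Group α] {H : Subgroup α} {s : Set α} {h x : α}

def normalClosureIn (H : Subgroup α) (s : Set α) : Subgroup α :=
  Subgroup.closure {x | ∃ h ∈ H, ∃ t ∈ s, x = h * t * h⁻¹}

lemma conj_mem_normalClosureIn_of_mem {t : α} (hh : h ∈ H) (ht : t ∈ s) :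
    h * t * h⁻¹ ∈ normalClosureIn H s :=
  Subgroup.subset_closure ⟨h, hh, t, ht, rfl⟩

lemma mem_normalClosureIn_of_mem (hx : x ∈ s) : x ∈ normalClosureIn H s := by
  simpa using conj_mem_normalClosureIn_of_mem H.one_mem hx

lemma conj_mem_normalClosureIn (hh : h ∈ H) (hx : x ∈ normalClosureIn H s) :
    h * x * h⁻¹ ∈ normalClosureIn H s := by
  have hmap : (normalClosureIn H s).map (MulAut.conj h).toMonoidHom ≤ normalClosureIn H s := by
    rw [normalClosureIn, MonoidHom.map_closure]
    refine Subgroup.closure_mono ?_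
    rintro _ ⟨_, ⟨k, hk, t, ht, rfl⟩, rfl⟩
    exact ⟨h * k, mul_mem hh hk, t, ht, by simp [mul_assoc]⟩
  exact hmap ⟨x, hx, rfl⟩

lemma normalClosureIn_le (hs : s ⊆ H) : normalClosureIn H s ≤ H := by
  rw [normalClosureIn, Subgroup.closure_le]
  rintro _ ⟨h, hh, t, ht, rfl⟩
  exact mul_mem (mul_mem hh (hs ht)) (inv_mem hh)

end NormalClosureIn

def HasSections (g : Perm (List Bool)) (f : Bool → Perm (List Bool)) : Prop :=
  ∀ s w, g (s :: w) = s :: f s w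

namespace HasSections

variable {g g' : Perm (List Bool)} {f f' : Bool → Perm (List Bool)}

lemma apply_nil (hg : HasSections g f) : g [] = [] := by
  cases hnil : g [] with
  | nil => rfl
  | cons s u =>
    have : g (s :: (f s)⁻¹ u) = g [] := by rw [hg, hnil]; simp
    exact absurd (g.injective this) (List.cons_ne_nil _ _)

lemma one : HasSections 1 1 := fun _ _ => rfl

lemma mul (hg : HasSections g f) (hg' : HasSections g' f') : HasSections (g * g') (f * f') :=
  fun s w => by rw [Perm.mul_apply, hg', hg]; rfl

lemma inv (hg : HasSections g f) : HasSections g⁻¹ f⁻¹ :=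
  fun s w => by rw [Perm.inv_eq_iff_eq, hg]; simp

lemma pow (hg : HasSections g f) (k : ℕ) : HasSections (g ^ k) (f ^ k) := by
  induction k with
  | zero => exact one
  | succ k ih => simpa only [pow_succ] using ih.mul hg

lemma commutatorElement (hg : HasSections g f) (hg' : HasSections g' f') :
    HasSections ⁅g, g'⁆ ⁅f, f'⁆ := by
  simpa only [commutatorElement_def] using ((hg.mul hg').mul hg.inv).mul hg'.inv

lemma congr_right (hg : HasSections g f) (h : ∀ s, f s = f' s) : HasSections g f' :=
  funext h ▸ hg

end HasSections

lemma act_e (w : List Bool) : act e w = w := by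
  induction w with
  | nil => rfl
  | cons x w ih => simp [act, Qout, Qtrans, ih]

lemma a_cons_false (w : List Bool) : a (false :: w) = true :: d w := rfl

lemma a_cons_true (w : List Bool) : a (true :: w) = false :: w :=
  congrArg (false :: ·) (act_e w)

lemma hasSections_b : HasSections b fun s => bif s then c else a := by
  intro s w; cases s <;> rfl

lemma hasSections_c : HasSections c fun _ => a := by
  intro s w; cases s <;> rfl

lemma hasSections_d : HasSections d fun s => bif s then b else 1 := by
  intro s w; cases s
  · exact congrArg (false :: ·) (act_e w)
  · rfl

lemma hasSections_a_mul_a : HasSections (a * a) fun _ => d := by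
  intro s w; cases s <;> simp [Perm.mul_apply, a_cons_false, a_cons_true]

lemma HasSections.conj_a {g : Perm (List Bool)} {f : Bool → Perm (List Bool)}
    (hg : HasSections g f) :
    HasSections (a * g * a⁻¹) fun s => bif s then d * f false * d⁻¹ else f true := by
  have ha_inv_false (w : List Bool) : a⁻¹ (false :: w) = true :: w := by
    rw [Perm.inv_eq_iff_eq, a_cons_true]
  have ha_inv_true (w : List Bool) : a⁻¹ (true :: w) = false :: d⁻¹ w := by
    rw [Perm.inv_eq_iff_eq, a_cons_false]; simp
  intro s w
  cases s
  · rw [Perm.mul_apply, Perm.mul_apply, ha_inv_false, hg, a_cons_true]; rfl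
  · rw [Perm.mul_apply, Perm.mul_apply, ha_inv_true, hg, a_cons_false]; rfl

lemma a_mem_G : a ∈ G := Subgroup.subset_closure (by simp)
lemma b_mem_G : b ∈ G := Subgroup.subset_closure (by simp)
lemma c_mem_G : c ∈ G := Subgroup.subset_closure (by simp)
lemma d_mem_G : d ∈ G := Subgroup.subset_closure (by simp)

lemma conj_a_mem_G {g : Perm (List Bool)} (hg : g ∈ G) : a * g * a⁻¹ ∈ G :=
  mul_mem (mul_mem a_mem_G hg) (inv_mem a_mem_G)

lemma exists_hasSections_apply_eq {h : Perm (List Bool)} (hh : h ∈ G) (s : Bool) :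
    ∃ H ∈ G, ∃ f, HasSections H f ∧ f s = h := by
  induction hh using Subgroup.closure_induction with
  | mem x hx =>
    rcases hx with rfl | rfl | rfl | rfl <;> cases s
    · exact ⟨b, b_mem_G, _, hasSections_b, rfl⟩
    · exact ⟨c, c_mem_G, _, hasSections_c, rfl⟩
    · exact ⟨_, conj_a_mem_G d_mem_G, _, hasSections_d.conj_a, rfl⟩
    · exact ⟨d, d_mem_G, _, hasSections_d, rfl⟩
    · exact ⟨_, conj_a_mem_G b_mem_G, _, hasSections_b.conj_a, rfl⟩
    · exact ⟨b, b_mem_G, _, hasSections_b, rfl⟩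
    · exact ⟨a * a, mul_mem a_mem_G a_mem_G, _, hasSections_a_mul_a, rfl⟩
    · exact ⟨a * a, mul_mem a_mem_G a_mem_G, _, hasSections_a_mul_a, rfl⟩
  | one => exact ⟨1, one_mem G, 1, HasSections.one, rfl⟩
  | mul x y _ _ hx hy =>
    obtain ⟨X, hXG, f, hX, rfl⟩ := hx
    obtain ⟨Y, hYG, f', hY, rfl⟩ := hy
    exact ⟨X * Y, mul_mem hXG hYG, _, hX.mul hY, rfl⟩
  | inv x _ hx =>
    obtain ⟨X, hXG, f, hX, rfl⟩ := hx
    exact ⟨X⁻¹, inv_mem hXG, _, hX.inv, rfl⟩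

def cycleCommutators : Set (Perm (List Bool)) :=
  {t | ∃ k : ℕ, t = ⁅c ^ k, a⁆ ∨ t = ⁅b ^ k, c⁆ ∨ t = ⁅d ^ k, b⁆ ∨ t = ⁅a ^ (2 * k), d⁆}

lemma cycleCommutators_subset_G : cycleCommutators ⊆ G := by
  have hcomm {x y : Perm (List Bool)} (hx : x ∈ G) (hy : y ∈ G) : ⁅x, y⁆ ∈ G := by
    rw [commutatorElement_def]
    exact mul_mem (mul_mem (mul_mem hx hy) (inv_mem hx)) (inv_mem hy)
  rintro _ ⟨k, rfl | rfl | rfl | rfl⟩ <;>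
    exact hcomm
      (pow_mem (by first | exact a_mem_G | exact b_mem_G | exact c_mem_G | exact d_mem_G) _)
      (by first | exact a_mem_G | exact b_mem_G | exact c_mem_G | exact d_mem_G)

lemma exists_mem_cycleCommutators_hasSections {t : Perm (List Bool)}
    (ht : t ∈ cycleCommutators) :
    ∃ y ∈ cycleCommutators, HasSections y (Pi.mulSingle true t) := by
  obtain ⟨k, rfl | rfl | rfl | rfl⟩ := ht
  · refine ⟨⁅b ^ k, c⁆, ⟨k, by tauto⟩, ?_⟩
    refine ((hasSections_b.pow k).commutatorElement hasSections_c).congr_right ?_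
    rintro (_ | _) <;> simp [commutatorElement_def]; group
  · refine ⟨⁅d ^ k, b⁆, ⟨k, by tauto⟩, ?_⟩
    refine ((hasSections_d.pow k).commutatorElement hasSections_b).congr_right ?_
    rintro (_ | _) <;> simp [commutatorElement_def]
  · refine ⟨⁅a ^ (2 * k), d⁆, ⟨k, by tauto⟩, ?_⟩
    rw [pow_mul, sq]
    refine ((hasSections_a_mul_a.pow k).commutatorElement hasSections_d).congr_right ?_
    rintro (_ | _) <;> simp [commutatorElement_def]
  · refine ⟨⁅c ^ (2 * k), a⁆, ⟨2 * k, by tauto⟩, ?_⟩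
    have hconj := ((hasSections_c.pow (2 * k)).inv).conj_a
    rw [show ⁅c ^ (2 * k), a⁆ = c ^ (2 * k) * (a * (c ^ (2 * k))⁻¹ * a⁻¹) by group]
    refine ((hasSections_c.pow (2 * k)).mul hconj).congr_right ?_
    rintro (_ | _) <;> simp [commutatorElement_def, mul_assoc]

def K : Subgroup (Perm (List Bool)) := normalClosureIn G cycleCommutators

lemma exists_mem_K_hasSections_mulSingle_of_mem_cycleCommutators {t : Perm (List Bool)}
    (ht : t ∈ cycleCommutators) (s : Bool) : ∃ y ∈ K, HasSections y (Pi.mulSingle s t) := by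
  obtain ⟨y, hy, hsec⟩ := exists_mem_cycleCommutators_hasSections ht
  cases s
  · refine ⟨a * y * a⁻¹, conj_mem_normalClosureIn_of_mem a_mem_G hy, ?_⟩
    exact hsec.conj_a.congr_right (by rintro (_ | _) <;> simp)
  · exact ⟨y, mem_normalClosureIn_of_mem hy, hsec⟩

lemma exists_mem_K_hasSections_mulSingle {x : Perm (List Bool)} (hx : x ∈ K) (s : Bool) :
    ∃ y ∈ K, HasSections y (Pi.mulSingle s x) := by
  induction hx using Subgroup.closure_induction generalizing s with
  | mem x hx =>
    obtain ⟨h, hh, t, ht, rfl⟩ := hx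
    obtain ⟨H, hHG, f, hH, rfl⟩ := exists_hasSections_apply_eq hh s
    obtain ⟨y, hyK, hy⟩ := exists_mem_K_hasSections_mulSingle_of_mem_cycleCommutators ht s
    refine ⟨H * y * H⁻¹, conj_mem_normalClosureIn hHG hyK, ((hH.mul hy).mul hH.inv).congr_right ?_⟩
    intro i
    by_cases hi : i = s
    · subst hi; simp
    · simp [hi]
  | one => exact ⟨1, one_mem K, by simpa using HasSections.one⟩
  | mul x x' _ _ hx hx' =>
    obtain ⟨y, hyK, hy⟩ := hx s
    obtain ⟨y', hyK', hy'⟩ := hx' s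
    exact ⟨y * y', mul_mem hyK hyK', by simpa only [Pi.mulSingle_mul] using hy.mul hy'⟩
  | inv x _ hx =>
    obtain ⟨y, hyK, hy⟩ := hx s
    exact ⟨y⁻¹, inv_mem hyK, by simpa only [Pi.mulSingle_inv] using hy.inv⟩

/-- `g` lies in `Rist(v)` and has section `x` at `v`. -/
def RigidAt (v : List Bool) (g x : Perm (List Bool)) : Prop :=
  (∀ u, ¬ v <+: u → g u = u) ∧ ∀ w, g (v ++ w) = v ++ x w

lemma rigidAt_nil (x : Perm (List Bool)) : RigidAt [] x x :=
  ⟨fun u hu => absurd u.nil_prefix hu, fun _ => rfl⟩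

lemma RigidAt.cons {v : List Bool} {s : Bool} {g x z : Perm (List Bool)} (hg : RigidAt v g x)
    (hz : HasSections z (Pi.mulSingle s g)) : RigidAt (s :: v) z x := by
  refine ⟨fun u hu => ?_, fun w => ?_⟩
  · cases u with
    | nil => exact hz.apply_nil
    | cons s' w =>
      rw [hz]
      by_cases hs : s' = s
      · subst hs
        rw [List.cons_prefix_cons] at hu
        simp [hg.1 w (by tauto)]
      · simp [hs]
  · rw [List.cons_append, hz]
    simp [hg.2]

lemma exists_mem_K_rigidAt (v : List Bool) {x : Perm (List Bool)} (hx : x ∈ K) :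
    ∃ g ∈ K, RigidAt v g x := by
  induction v with
  | nil => exact ⟨x, hx, rigidAt_nil x⟩
  | cons s v ih =>
    obtain ⟨g, hgK, hg⟩ := ih
    obtain ⟨z, hzK, hz⟩ := exists_mem_K_hasSections_mulSingle hgK s
    exact ⟨z, hzK, hg.cons hz⟩

lemma commutatorElement_c_a_mem_K : ⁅c, a⁆ ∈ K :=
  mem_normalClosureIn_of_mem ⟨1, by simp⟩

lemma commutatorElement_c_a_apply :
    ⁅c, a⁆ [true, false, false, false] = [true, false, false, true] := rfl

/-- `G` is weakly branch: every rigid stabilizer `Rist_G(v)` is nontrivial. -/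
theorem weakly_branch (v : List Bool) :
    ∃ g ∈ G, g ≠ 1 ∧ ∀ u : List Bool, ¬ (v <+: u) → g u = u := by
  obtain ⟨g, hgK, hg⟩ := exists_mem_K_rigidAt v commutatorElement_c_a_mem_K
  refine ⟨g, normalClosureIn_le cycleCommutators_subset_G hgK, ?_, hg.1⟩
  rintro rfl
  simpa [commutatorElement_c_a_apply] using hg.2 [true, false, false, false]

end BVTree
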